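/- arXiv:2506.03358 — 4 statements merged into one kernel-verified Lean document; each statement's English description precedes it below -/
import Mathlib

section
/- Suppose φ : ℝⁿ → ℝ is differentiable with L-Lipschitz gradient (L > 0), f : ℝⁿ → ℝ satisfies |f(x) − φ(x)| ≤ ε_f for all x, η ∈ (0,1/2], α > 0, and d, g ∈ ℝⁿ. If the line-search condition fails at step size α, i.e. f(x + α d) ≥ f(x) + η α gᵀd + 2ε_f, then −(1−η) gᵀd ≤ ‖∇φ(x) − g‖·‖d‖ + (L/2)·α·‖d‖². -/
/-!
The noise costs at most `ε_f` at each of the two points, so the failed test for `f` is a failed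
Armijo test for `φ` itself. Comparing it with the descent lemma
`φ (x + α d) ≤ φ x + α ∇φ(x)ᵀd + (L/2) α² ‖d‖²` and dividing by `α` gives
`η gᵀd ≤ ∇φ(x)ᵀd + (L/2) α ‖d‖²`; Cauchy–Schwarz on `(∇φ(x) - g)ᵀd` finishes.
The descent lemma follows from the monotonicity of
`t ↦ φ (x + t v) - t ∇φ(x)ᵀv - (L/2) t² ‖v‖²`, whose derivative is nonpositive for `t ≥ 0`.
-/

section DescentLemma

variable {E : Type*} [NormedAddCommGroup E] [InnerProductSpace ℝ E] [CompleteSpace E]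
  {φ : E → ℝ}

theorem hasDerivAt_comp_add_smul (hφ : Differentiable ℝ φ) (x v : E) (t : ℝ) :
    HasDerivAt (fun s : ℝ => φ (x + s • v)) (inner ℝ (gradient φ (x + t • v)) v) t := by
  have hline : HasDerivAt (fun s : ℝ => x + s • v) v t := by
    simpa using ((hasDerivAt_id t).smul_const v).const_add x
  simpa [Function.comp_def] using
    (hφ (x + t • v)).hasGradientAt.hasFDerivAt.comp_hasDerivAt t hline

theorem inner_gradient_add_smul_sub_le {K : NNReal} (hLip : LipschitzWith K (gradient φ))
    (x v : E) {t : ℝ} (ht : 0 ≤ t) :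
    inner ℝ (gradient φ (x + t • v) - gradient φ x) v ≤ K * t * ‖v‖ ^ 2 :=
  calc inner ℝ (gradient φ (x + t • v) - gradient φ x) v
      ≤ ‖gradient φ (x + t • v) - gradient φ x‖ * ‖v‖ := real_inner_le_norm _ _
    _ ≤ K * ‖(x + t • v) - x‖ * ‖v‖ := by
        gcongr
        simpa only [dist_eq_norm] using hLip.dist_le_mul (x + t • v) x
    _ = K * t * ‖v‖ ^ 2 := by
        rw [add_sub_cancel_left, norm_smul, Real.norm_of_nonneg ht]; ring

theorem le_add_inner_gradient_add_sq_of_lipschitzWith {K : NNReal} (hφ : Differentiable ℝ φ)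
    (hLip : LipschitzWith K (gradient φ)) (x v : E) :
    φ (x + v) ≤ φ x + inner ℝ (gradient φ x) v + K / 2 * ‖v‖ ^ 2 := by
  set h : ℝ → ℝ := fun t =>
    φ (x + t • v) - t * inner ℝ (gradient φ x) v - K / 2 * t ^ 2 * ‖v‖ ^ 2
  have hderiv : ∀ t, HasDerivAt h (inner ℝ (gradient φ (x + t • v) - gradient φ x) v
      - K * t * ‖v‖ ^ 2) t := by
    intro t
    have := (((hasDerivAt_comp_add_smul hφ x v t).sub
      ((hasDerivAt_id t).mul_const (inner ℝ (gradient φ x) v))).sub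
      (((hasDerivAt_pow 2 t).const_mul (K / 2 : ℝ)).mul_const (‖v‖ ^ 2)))
    refine this.congr_deriv ?_
    rw [inner_sub_left]; simp only [Nat.cast_ofNat]; ring
  have hanti : AntitoneOn h (Set.Ici 0) := by
    refine antitoneOn_of_hasDerivWithinAt_nonpos (convex_Ici 0)
      (fun t _ => (hderiv t).continuousAt.continuousWithinAt)
      (fun t _ => (hderiv t).hasDerivWithinAt) fun t ht => ?_
    rw [interior_Ici] at ht
    exact sub_nonpos.2 (inner_gradient_add_smul_sub_le hLip x v ht.le)
  have h10 : h 1 ≤ h 0 := hanti Set.self_mem_Ici (by norm_num) zero_le_one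
  simp only [h, one_smul, zero_smul, add_zero] at h10
  linarith

end DescentLemma

theorem stmt_2_general (n : ℕ) (φ f : EuclideanSpace ℝ (Fin n) → ℝ)
    (x g d : EuclideanSpace ℝ (Fin n)) (L ε_f η α : ℝ)
    (hL : 0 < L) (hφ : Differentiable ℝ φ)
    (hLip : LipschitzWith (Real.toNNReal L) (fun y => gradient φ y))
    (hf : ∀ y, |f y - φ y| ≤ ε_f)
    (hα : 0 < α)
    (hfail : f (x + α • d) ≥ f x + η * α * (inner ℝ g d : ℝ) + 2 * ε_f) :
    -(1 - η) * (inner ℝ g d : ℝ) ≤ ‖gradient φ x - g‖ * ‖d‖ + L / 2 * α * ‖d‖ ^ 2 := by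
  have hφ_fail : φ x + η * α * inner ℝ g d ≤ φ (x + α • d) := by
    linarith [abs_le.1 (hf (x + α • d)), abs_le.1 (hf x)]
  have hdescent := le_add_inner_gradient_add_sq_of_lipschitzWith hφ hLip x (α • d)
  rw [Real.coe_toNNReal L hL.le, real_inner_smul_right, norm_smul, Real.norm_of_nonneg hα.le]
    at hdescent
  have hscaled : η * inner ℝ g d ≤ inner ℝ (gradient φ x) d + L / 2 * α * ‖d‖ ^ 2 := by
    refine le_of_mul_le_mul_left ?_ hα
    linarith
  have hcs : inner ℝ (gradient φ x) d - inner ℝ g d ≤ ‖gradient φ x - g‖ * ‖d‖ := by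
    simpa only [inner_sub_left] using real_inner_le_norm (gradient φ x - g) d
  linarith

theorem stmt_2 (n : ℕ) (φ f : EuclideanSpace ℝ (Fin n) → ℝ)
    (x g d : EuclideanSpace ℝ (Fin n)) (L ε_f η α : ℝ)
    (hL : 0 < L) (hφ : Differentiable ℝ φ)
    (hLip : LipschitzWith (Real.toNNReal L) (fun y => gradient φ y))
    (hεf : 0 ≤ ε_f) (hf : ∀ y, |f y - φ y| ≤ ε_f)
    (hη0 : 0 < η) (hη1 : η ≤ 1 / 2) (hα : 0 < α)
    (hfail : f (x + α • d) ≥ f x + η * α * (inner ℝ g d : ℝ) + 2 * ε_f) :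
    -(1 - η) * (inner ℝ g d : ℝ) ≤ ‖gradient φ x - g‖ * ‖d‖ + L / 2 * α * ‖d‖ ^ 2 :=
  stmt_2_general n φ f x g d L ε_f η α hL hφ hLip hf hα hfail
end

section
/- Let φ have L-Lipschitz gradient, f satisfy |f(x)−φ(x)| ≤ ε_f everywhere, η ∈ (0,1/2], σ_d ∈ (0,1], κ_d ≥ 1, p ≥ 0, σ ∈ (0,1), and define ᾱ_p = 2(1−η)σ_d(1−σ)^{1+p} / (2κ_d(1+σ)^{(1+p)/2} + Lκ_d²(1+σ)^{1+p}). Suppose the direction d satisfies gᵀd ≤ −σ_d‖g‖^{1+p} and ‖d‖ ≤ κ_d‖g‖^{(1+p)/2}, the gradient estimate g satisfies ‖g − ∇φ(x)‖ ≤ max{ε₁, σ·ᾱ_p·min(‖∇φ(x)‖, ‖∇φ(x)‖^{(1+p)/2})}, and min(‖∇φ(x)‖, ‖∇φ(x)‖^{(1+p)/2}) ≥ ε₁/(σ·ᾱ_p) > 0. Then for any step size α with 0 < α < ᾱ_p, the Armijo-type condition f(x + α d) < f(x) + η α gᵀd + 2ε_f holds. -/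
/-!
The descent lemma for the `L`-smooth `φ` gives
`φ (x + α d) ≤ φ x + α ⟪∇φ x, d⟫ + L α² ‖d‖² / 2`, and replacing `φ` by `f` costs `2 ε_f`.
Since `ε₁` is dominated, the gradient error is at most `σ ᾱ_p min r (r ^ ((1 + p) / 2))` with
`r = ‖∇φ x‖`; as `ᾱ_p ≤ 1` this is a relative error `σ r`, so `(1 - σ) r ≤ ‖g‖ ≤ (1 + σ) r`.
Then each term of `⟪∇φ x, d⟫ - η ⟪g, d⟫ + L α ‖d‖² / 2` is controlled by `r ^ (1 + p)`: the error
term by `σ ᾱ_p A`, the curvature term by `α B` and the descent term by `-N`, where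
`A = κ_d (1 + σ) ^ ((1 + p) / 2)`, `B = L κ_d² (1 + σ) ^ (1 + p) / 2`,
`N = (1 - η) σ_d (1 - σ) ^ (1 + p)`, and `ᾱ_p` is exactly the step with `ᾱ_p (A + B) = N`.
As `σ < 1` and `α < ᾱ_p`, the sum is negative.
-/

open Real InnerProductSpace
open scoped NNReal

section Descent

variable {E : Type*} [NormedAddCommGroup E] [InnerProductSpace ℝ E] [CompleteSpace E]
  {φ : E → ℝ} {K : ℝ≥0}

theorem image_add_le_of_lipschitzWith_gradient (hφ : Differentiable ℝ φ)
    (hK : LipschitzWith K (gradient φ)) (x v : E) :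
    φ (x + v) ≤ φ x + ⟪gradient φ x, v⟫_ℝ + K / 2 * ‖v‖ ^ 2 := by
  have hderiv (t : ℝ) :
      HasDerivAt (fun t : ℝ => φ (x + t • v)) ⟪gradient φ (x + t • v), v⟫_ℝ t := by
    have h := (hφ (x + t • v)).hasGradientAt.hasFDerivAt.comp_hasDerivAt t
      (((hasDerivAt_id t).smul_const v).const_add x)
    rwa [one_smul, toDual_apply_apply] at h
  have hbound (t : ℝ) :
      HasDerivAt (fun t : ℝ => φ x + t * ⟪gradient φ x, v⟫_ℝ + K / 2 * t ^ 2 * ‖v‖ ^ 2)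
        (⟪gradient φ x, v⟫_ℝ + K * t * ‖v‖ ^ 2) t := by
    refine ((((hasDerivAt_id' t).mul_const ⟪gradient φ x, v⟫_ℝ).const_add (φ x)).add
      (((hasDerivAt_pow 2 t).const_mul ((K : ℝ) / 2)).mul_const (‖v‖ ^ 2))).congr_deriv ?_
    ring
  have hslope (t : ℝ) (ht : 0 ≤ t) :
      ⟪gradient φ (x + t • v), v⟫_ℝ ≤ ⟪gradient φ x, v⟫_ℝ + K * t * ‖v‖ ^ 2 := by
    calc ⟪gradient φ (x + t • v), v⟫_ℝ
        = ⟪gradient φ x, v⟫_ℝ + ⟪gradient φ (x + t • v) - gradient φ x, v⟫_ℝ := by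
          rw [inner_sub_left]; ring
      _ ≤ ⟪gradient φ x, v⟫_ℝ + ‖gradient φ (x + t • v) - gradient φ x‖ * ‖v‖ := by
          gcongr; exact real_inner_le_norm _ _
      _ ≤ ⟪gradient φ x, v⟫_ℝ + K * ‖t • v‖ * ‖v‖ := by
          gcongr; simpa using hK.norm_sub_le (x + t • v) x
      _ = ⟪gradient φ x, v⟫_ℝ + K * t * ‖v‖ ^ 2 := by
          rw [norm_smul, Real.norm_of_nonneg ht]; ring
  have := image_le_of_deriv_right_le_deriv_boundary
    (fun t _ => (hderiv t).continuousAt.continuousWithinAt) (fun t _ => (hderiv t).hasDerivWithinAt)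
    (by simp) (fun t _ => (hbound t).continuousAt.continuousWithinAt)
    (fun t _ => (hbound t).hasDerivWithinAt) (fun t ht => hslope t ht.1)
    (Set.right_mem_Icc.mpr zero_le_one)
  simpa using this

theorem image_add_smul_lt_of_inner_gradient_add_lt (hφ : Differentiable ℝ φ)
    (hK : LipschitzWith K (gradient φ)) {x d : E} {α c : ℝ} (hα : 0 < α)
    (h : ⟪gradient φ x, d⟫_ℝ + K * α / 2 * ‖d‖ ^ 2 < c) :
    φ (x + α • d) < φ x + α * c := by
  have hdesc := image_add_le_of_lipschitzWith_gradient hφ hK x (α • d)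
  rw [real_inner_smul_right, norm_smul, Real.norm_of_nonneg hα.le] at hdesc
  nlinarith

end Descent

section RelativeError

variable {E : Type*} [SeminormedAddCommGroup E] {u g : E} {σ s : ℝ}

theorem rpow_norm_le_of_norm_sub_le (hσ : 0 ≤ σ) (hs : 0 ≤ s) (h : ‖g - u‖ ≤ σ * ‖u‖) :
    ‖g‖ ^ s ≤ (1 + σ) ^ s * ‖u‖ ^ s := by
  rw [← Real.mul_rpow (by linarith) (norm_nonneg u)]
  gcongr
  linarith [norm_sub_norm_le g u]

theorem rpow_le_rpow_norm_of_norm_sub_le (hσ : σ ≤ 1) (hs : 0 ≤ s) (h : ‖g - u‖ ≤ σ * ‖u‖) :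
    (1 - σ) ^ s * ‖u‖ ^ s ≤ ‖g‖ ^ s := by
  rw [← Real.mul_rpow (by linarith) (norm_nonneg u)]
  have : 0 ≤ (1 - σ) * ‖u‖ := by have := norm_nonneg u; positivity
  gcongr
  linarith [norm_sub_norm_le u g, norm_sub_rev u g]

end RelativeError

theorem rpow_div_two_sq {x : ℝ} (hx : 0 ≤ x) (s : ℝ) : (x ^ (s / 2)) ^ 2 = x ^ s := by
  rw [← Real.rpow_two, ← Real.rpow_mul hx, div_mul_cancel₀ s two_ne_zero]


noncomputable def armijoStepBound (η σ_d κ_d L p σ : ℝ) : ℝ :=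
  2 * (1 - η) * σ_d * (1 - σ) ^ (1 + p) /
    (2 * κ_d * (1 + σ) ^ ((1 + p) / 2) + L * κ_d ^ 2 * (1 + σ) ^ (1 + p))

section StepBound

variable {η σ_d κ_d L p σ : ℝ}

theorem armijoStepBound_mul (hκ : 0 < κ_d) (hL : 0 ≤ L) (hσ : -1 < σ) :
    armijoStepBound η σ_d κ_d L p σ *
        (κ_d * (1 + σ) ^ ((1 + p) / 2) + L / 2 * κ_d ^ 2 * (1 + σ) ^ (1 + p)) =
      (1 - η) * σ_d * (1 - σ) ^ (1 + p) := by
  have h₁ : 0 < (1 + σ) ^ ((1 + p) / 2) := Real.rpow_pos_of_pos (by linarith) _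
  have h₂ : 0 < (1 + σ) ^ (1 + p) := Real.rpow_pos_of_pos (by linarith) _
  unfold armijoStepBound
  field_simp

theorem armijoStepBound_le_one (hη : 0 ≤ η) (hσd₀ : 0 ≤ σ_d) (hσd₁ : σ_d ≤ 1)
    (hκ : 1 ≤ κ_d) (hL : 0 ≤ L) (hp : 0 ≤ p) (hσ₀ : 0 ≤ σ) (hσ₁ : σ ≤ 1) :
    armijoStepBound η σ_d κ_d L p σ ≤ 1 := by
  have h₁ : (1 - σ) ^ (1 + p) ≤ 1 := Real.rpow_le_one (by linarith) (by linarith) (by linarith)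
  have h₁' : 0 ≤ (1 - σ) ^ (1 + p) := Real.rpow_nonneg (by linarith) _
  have h₂ : 1 ≤ (1 + σ) ^ ((1 + p) / 2) := Real.one_le_rpow (by linarith) (by positivity)
  have h₃ : 0 ≤ L * κ_d ^ 2 * (1 + σ) ^ (1 + p) := by
    have := Real.rpow_nonneg (by linarith : (0 : ℝ) ≤ 1 + σ) (1 + p); positivity
  unfold armijoStepBound
  rw [div_le_one (by nlinarith)]
  nlinarith [mul_nonneg hσd₀ h₁', mul_le_mul hσd₁ h₁ h₁' zero_le_one]

end StepBound

section SufficientDecrease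

variable {E : Type*} [NormedAddCommGroup E] [InnerProductSpace ℝ E]

theorem inner_add_mul_sq_lt_of_norm_sub_le {u g d : E} {η σ_d κ_d L p σ α : ℝ}
    (hη₀ : 0 ≤ η) (hη₁ : η ≤ 1) (hσd₀ : 0 ≤ σ_d) (hσd₁ : σ_d ≤ 1) (hκ : 1 ≤ κ_d) (hL : 0 ≤ L)
    (hp : 0 ≤ p) (hσ₀ : 0 ≤ σ) (hσ₁ : σ < 1)
    (hd₁ : ⟪g, d⟫_ℝ ≤ -σ_d * ‖g‖ ^ (1 + p)) (hd₂ : ‖d‖ ≤ κ_d * ‖g‖ ^ ((1 + p) / 2))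
    (hu : u ≠ 0)
    (herr : ‖g - u‖ ≤ σ * armijoStepBound η σ_d κ_d L p σ * min ‖u‖ (‖u‖ ^ ((1 + p) / 2)))
    (hα₀ : 0 ≤ α) (hα : α < armijoStepBound η σ_d κ_d L p σ) :
    ⟪u, d⟫_ℝ + L * α / 2 * ‖d‖ ^ 2 < η * ⟪g, d⟫_ℝ := by
  set ᾱ := armijoStepBound η σ_d κ_d L p σ
  set q := (1 + p) / 2
  set r := ‖u‖
  set A := κ_d * (1 + σ) ^ q
  set B := L / 2 * κ_d ^ 2 * (1 + σ) ^ (1 + p)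
  have hr : 0 < r := norm_pos_iff.mpr hu
  have hrp : 0 < r ^ (1 + p) := Real.rpow_pos_of_pos hr _
  have hq : 0 ≤ q := by positivity
  have hrr : r ^ q * r ^ q = r ^ (1 + p) := by rw [← sq]; exact rpow_div_two_sq hr.le _
  have hσσ : (1 + σ) ^ q * (1 + σ) ^ q = (1 + σ) ^ (1 + p) := by
    rw [← sq]; exact rpow_div_two_sq (by linarith) _
  have hᾱ : 0 < ᾱ := hα₀.trans_lt hα
  have hB : 0 ≤ B := by
    have := Real.rpow_nonneg (by linarith : (0 : ℝ) ≤ 1 + σ) (1 + p); positivity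
  have herr' : ‖g - u‖ ≤ σ * ᾱ * r ^ q := herr.trans (by gcongr; exact min_le_right _ _)
  have hrel : ‖g - u‖ ≤ σ * r := herr.trans <| by
    have := armijoStepBound_le_one hη₀ hσd₀ hσd₁ hκ hL hp hσ₀ hσ₁.le
    calc σ * ᾱ * min r (r ^ q) ≤ σ * 1 * r := by gcongr; exact min_le_left _ _
      _ = σ * r := by ring
  have hdA : ‖d‖ ≤ A * r ^ q := hd₂.trans <| by
    calc κ_d * ‖g‖ ^ q ≤ κ_d * ((1 + σ) ^ q * r ^ q) := by
          gcongr; exact rpow_norm_le_of_norm_sub_le hσ₀ hq hrel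
      _ = A * r ^ q := by ring
  have hcross : ⟪u, d⟫_ℝ ≤ ⟪g, d⟫_ℝ + σ * ᾱ * A * r ^ (1 + p) := by
    calc ⟪u, d⟫_ℝ = ⟪g, d⟫_ℝ - ⟪g - u, d⟫_ℝ := by rw [inner_sub_left]; ring
      _ ≤ ⟪g, d⟫_ℝ + ‖g - u‖ * ‖d‖ := by linarith [neg_le_of_abs_le (abs_real_inner_le_norm (g - u) d)]
      _ ≤ ⟪g, d⟫_ℝ + σ * ᾱ * r ^ q * (A * r ^ q) := by gcongr
      _ = ⟪g, d⟫_ℝ + σ * ᾱ * A * r ^ (1 + p) := by rw [← hrr]; ring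
  have hcurv : L * α / 2 * ‖d‖ ^ 2 ≤ α * B * r ^ (1 + p) := by
    calc L * α / 2 * ‖d‖ ^ 2 ≤ L * α / 2 * (A * r ^ q) ^ 2 := by gcongr
      _ = α * B * r ^ (1 + p) := by simp only [A, B, ← hrr, ← hσσ]; ring
  have hdir : (1 - η) * ⟪g, d⟫_ℝ ≤ -((1 - η) * σ_d * (1 - σ) ^ (1 + p) * r ^ (1 + p)) := by
    have hη : 0 ≤ 1 - η := by linarith
    have hlow := rpow_le_rpow_norm_of_norm_sub_le hσ₁.le (by linarith : (0 : ℝ) ≤ 1 + p) hrel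
    calc (1 - η) * ⟪g, d⟫_ℝ ≤ -((1 - η) * σ_d * ‖g‖ ^ (1 + p)) := by
          linarith [mul_le_mul_of_nonneg_left hd₁ hη]
      _ ≤ -((1 - η) * σ_d * ((1 - σ) ^ (1 + p) * r ^ (1 + p))) :=
          neg_le_neg (mul_le_mul_of_nonneg_left hlow (mul_nonneg hη hσd₀))
      _ = -((1 - η) * σ_d * (1 - σ) ^ (1 + p) * r ^ (1 + p)) := by ring
  have hcoef : σ * ᾱ * A + α * B < (1 - η) * σ_d * (1 - σ) ^ (1 + p) := by
    have hA : 0 < A := by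
      have := Real.rpow_pos_of_pos (by linarith : (0 : ℝ) < 1 + σ) q; positivity
    have hmul : ᾱ * (A + B) = (1 - η) * σ_d * (1 - σ) ^ (1 + p) :=
      armijoStepBound_mul (by linarith) hL (by linarith)
    nlinarith [mul_pos (mul_pos (sub_pos.2 hσ₁) hᾱ) hA, mul_nonneg (sub_nonneg.2 hα.le) hB]
  linarith [mul_lt_mul_of_pos_right hcoef hrp]

end SufficientDecrease

theorem stmt_3_general (n : ℕ) (φ f : EuclideanSpace ℝ (Fin n) → ℝ)
    (x g d : EuclideanSpace ℝ (Fin n)) (L ε_f ε₁ η σ_d κ_d p σ ᾱ_p α : ℝ)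
    (hL : 0 < L) (hφ : Differentiable ℝ φ)
    (hLip : LipschitzWith (Real.toNNReal L) (fun y => gradient φ y))
    (hf : ∀ y, |f y - φ y| ≤ ε_f)
    (hη0 : 0 < η) (hη1 : η ≤ 1 / 2)
    (hσd0 : 0 < σ_d) (hσd1 : σ_d ≤ 1) (hκd : 1 ≤ κ_d) (hp : 0 ≤ p)
    (hσ0 : 0 < σ) (hσ1 : σ < 1)
    (hᾱp : ᾱ_p = 2 * (1 - η) * σ_d * (1 - σ) ^ (1 + p) /
      (2 * κ_d * (1 + σ) ^ ((1 + p) / 2) + L * κ_d ^ 2 * (1 + σ) ^ (1 + p)))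
    (hd1 : (inner ℝ g d : ℝ) ≤ -σ_d * ‖g‖ ^ (1 + p))
    (hd2 : ‖d‖ ≤ κ_d * ‖g‖ ^ ((1 + p) / 2))
    (hacc : ‖g - gradient φ x‖ ≤
      max ε₁ (σ * ᾱ_p * min ‖gradient φ x‖ (‖gradient φ x‖ ^ ((1 + p) / 2))))
    (hbig : min ‖gradient φ x‖ (‖gradient φ x‖ ^ ((1 + p) / 2)) ≥ ε₁ / (σ * ᾱ_p))
    (hbig' : 0 < ε₁ / (σ * ᾱ_p))
    (hα0 : 0 < α) (hα1 : α < ᾱ_p) :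
    f (x + α • d) < f x + η * α * (inner ℝ g d : ℝ) + 2 * ε_f := by
  have hσᾱ : 0 < σ * ᾱ_p := mul_pos hσ0 (hα0.trans hα1)
  have hmin := hbig'.trans_le hbig
  have hu : gradient φ x ≠ 0 := norm_pos_iff.mp (hmin.trans_le (min_le_left _ _))
  have herr := hacc.trans_eq (max_eq_right ((div_le_iff₀' hσᾱ).mp hbig))
  subst hᾱp
  have hkey := inner_add_mul_sq_lt_of_norm_sub_le hη0.le (by linarith) hσd0.le hσd1 hκd hL.le hp
    hσ0.le hσ1 hd1 hd2 hu herr hα0.le hα1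
  rw [← Real.coe_toNNReal L hL.le] at hkey
  have hdec := image_add_smul_lt_of_inner_gradient_add_lt hφ hLip hα0 hkey
  have hfy := abs_le.mp (hf (x + α • d))
  have hfx := abs_le.mp (hf x)
  linarith

theorem stmt_3 (n : ℕ) (φ f : EuclideanSpace ℝ (Fin n) → ℝ)
    (x g d : EuclideanSpace ℝ (Fin n)) (L ε_f ε₁ η σ_d κ_d p σ ᾱ_p α : ℝ)
    (hL : 0 < L) (hφ : Differentiable ℝ φ)
    (hLip : LipschitzWith (Real.toNNReal L) (fun y => gradient φ y))
    (hεf : 0 ≤ ε_f) (hf : ∀ y, |f y - φ y| ≤ ε_f)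
    (hη0 : 0 < η) (hη1 : η ≤ 1 / 2)
    (hσd0 : 0 < σ_d) (hσd1 : σ_d ≤ 1) (hκd : 1 ≤ κ_d) (hp : 0 ≤ p)
    (hσ0 : 0 < σ) (hσ1 : σ < 1) (hε₁ : 0 ≤ ε₁)
    (hᾱp : ᾱ_p = 2 * (1 - η) * σ_d * (1 - σ) ^ (1 + p) /
      (2 * κ_d * (1 + σ) ^ ((1 + p) / 2) + L * κ_d ^ 2 * (1 + σ) ^ (1 + p)))
    (hd1 : (inner ℝ g d : ℝ) ≤ -σ_d * ‖g‖ ^ (1 + p))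
    (hd2 : ‖d‖ ≤ κ_d * ‖g‖ ^ ((1 + p) / 2))
    (hacc : ‖g - gradient φ x‖ ≤
      max ε₁ (σ * ᾱ_p * min ‖gradient φ x‖ (‖gradient φ x‖ ^ ((1 + p) / 2))))
    (hbig : min ‖gradient φ x‖ (‖gradient φ x‖ ^ ((1 + p) / 2)) ≥ ε₁ / (σ * ᾱ_p))
    (hbig' : 0 < ε₁ / (σ * ᾱ_p))
    (hα0 : 0 < α) (hα1 : α < ᾱ_p) :
    f (x + α • d) < f x + η * α * (inner ℝ g d : ℝ) + 2 * ε_f :=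
  stmt_3_general n φ f x g d L ε_f ε₁ η σ_d κ_d p σ ᾱ_p α hL hφ hLip hf hη0 hη1 hσd0 hσd1 hκd hp hσ0
    hσ1 hᾱp hd1 hd2 hacc hbig hbig' hα0 hα1
end

section
/- Let φ have L-Lipschitz gradient and f satisfy |f(x)−φ(x)| ≤ ε_f for all x. If the Armijo-type condition f(x + α d) < f(x) + η α gᵀd + 2ε_f holds with gᵀd ≤ −σ_d‖g‖^{1+p}, ‖g‖ ≥ (1−σ)‖∇φ(x)‖, ‖∇φ(x)‖ ≥ ε₁/(σ·ᾱ_p) with σ ᾱ_p ≤ 1, ε₁ ≥ 0, σ > 0, ᾱ_p > 0, α ≥ θᾱ_p, η > 0, σ_d > 0, σ ∈ (0,1), θ ∈ (0,1], then φ(x) − φ(x + αd) > η θ ᾱ_p σ_d (1−σ)^{1+p} (ε₁/(σᾱ_p))^{1+p} − 4ε_f. -/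
/-!
Passing from φ to its noisy estimate f changes each difference of values by at most 2ε_f, so the
Armijo condition on f yields a decrease of φ of at least `-η α gᵀd - 4ε_f`. The descent condition
turns `-gᵀd` into `σ_d ‖g‖^(1+p)`, the relative accuracy of g and the lower bound on `‖∇φ(x)‖`
give `‖g‖ ≥ (1-σ) ε₁/(σ ᾱ_p)`, and finally `α ≥ θ ᾱ_p`.
-/

open Real

lemma sub_sub_two_mul_le_sub_of_abs_sub_le {X : Type*} {f φ : X → ℝ} {ε : ℝ}
    (hf : ∀ y, |f y - φ y| ≤ ε) (a b : X) : f a - f b - 2 * ε ≤ φ a - φ b := by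
  have ha := abs_le.mp (hf a)
  have hb := abs_le.mp (hf b)
  linarith

lemma mul_rpow_le_rpow_of_relative_error {a b q σ r : ℝ} (hσ : σ < 1) (hq : 0 ≤ q)
    (hr : 0 ≤ r) (hab : (1 - σ) * b ≤ a) (hqb : q ≤ b) : (1 - σ) ^ r * q ^ r ≤ a ^ r := by
  have hσ' : 0 ≤ 1 - σ := by linarith
  rw [← mul_rpow hσ' hq]
  exact rpow_le_rpow (mul_nonneg hσ' hq) ((mul_le_mul_of_nonneg_left hqb hσ').trans hab) hr

lemma sub_lt_sub_of_armijo {E : Type*} [NormedAddCommGroup E] [InnerProductSpace ℝ E]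
    (f : E → ℝ) {x g d : E} {η α σ_d r c : ℝ} (hηα : 0 ≤ η * α)
    (harmijo : f (x + α • d) < f x + η * α * inner ℝ g d + c)
    (hd : inner ℝ g d ≤ -σ_d * ‖g‖ ^ r) :
    η * α * (σ_d * ‖g‖ ^ r) - c < f x - f (x + α • d) := by
  have := mul_le_mul_of_nonneg_left hd hηα
  linarith

theorem stmt_6_general (n : ℕ) (φ f : EuclideanSpace ℝ (Fin n) → ℝ)
    (x g d : EuclideanSpace ℝ (Fin n)) (ε_f ε₁ η σ_d p σ ᾱ_p θ α : ℝ)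
    (hf : ∀ y, |f y - φ y| ≤ ε_f)
    (harmijo : f (x + α • d) < f x + η * α * (inner ℝ g d : ℝ) + 2 * ε_f)
    (hd1 : (inner ℝ g d : ℝ) ≤ -σ_d * ‖g‖ ^ (1 + p))
    (hlo : ‖g‖ ≥ (1 - σ) * ‖gradient φ x‖)
    (hgrad : ‖gradient φ x‖ ≥ ε₁ / (σ * ᾱ_p))
    (hε₁ : 0 ≤ ε₁) (hσ0 : 0 < σ) (hσ1 : σ < 1) (hᾱp : 0 < ᾱ_p)
    (hα : α ≥ θ * ᾱ_p) (hη : 0 < η) (hσd : 0 < σ_d)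
    (hp : 0 ≤ p) (hα0 : 0 < α) :
    φ x - φ (x + α • d) >
      η * θ * ᾱ_p * σ_d * (1 - σ) ^ (1 + p) * (ε₁ / (σ * ᾱ_p)) ^ (1 + p) - 4 * ε_f := by
  have hq : 0 ≤ ε₁ / (σ * ᾱ_p) := by positivity
  have hnoise := sub_sub_two_mul_le_sub_of_abs_sub_le hf x (x + α • d)
  have hdecrease := sub_lt_sub_of_armijo f (by positivity) harmijo hd1
  have hg :=
    mul_rpow_le_rpow_of_relative_error hσ1 hq (by linarith : (0 : ℝ) ≤ 1 + p) hlo hgrad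
  have hθα : η * (θ * ᾱ_p) ≤ η * α := mul_le_mul_of_nonneg_left hα hη.le
  have hbound : η * (θ * ᾱ_p) * (σ_d * ((1 - σ) ^ (1 + p) * (ε₁ / (σ * ᾱ_p)) ^ (1 + p)))
      ≤ η * α * (σ_d * ‖g‖ ^ (1 + p)) :=
    mul_le_mul hθα (mul_le_mul_of_nonneg_left hg hσd.le) (by positivity) (by positivity)
  linarith

theorem stmt_6 (n : ℕ) (φ f : EuclideanSpace ℝ (Fin n) → ℝ)
    (x g d : EuclideanSpace ℝ (Fin n)) (L ε_f ε₁ η σ_d p σ ᾱ_p θ α : ℝ)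
    (hL : 0 < L) (hφ : Differentiable ℝ φ)
    (hLip : LipschitzWith (Real.toNNReal L) (fun y => gradient φ y))
    (hεf : 0 ≤ ε_f) (hf : ∀ y, |f y - φ y| ≤ ε_f)
    (harmijo : f (x + α • d) < f x + η * α * (inner ℝ g d : ℝ) + 2 * ε_f)
    (hd1 : (inner ℝ g d : ℝ) ≤ -σ_d * ‖g‖ ^ (1 + p))
    (hlo : ‖g‖ ≥ (1 - σ) * ‖gradient φ x‖)
    (hgrad : ‖gradient φ x‖ ≥ ε₁ / (σ * ᾱ_p)) (hσᾱ : σ * ᾱ_p ≤ 1)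
    (hε₁ : 0 ≤ ε₁) (hσ0 : 0 < σ) (hσ1 : σ < 1) (hᾱp : 0 < ᾱ_p)
    (hα : α ≥ θ * ᾱ_p) (hη : 0 < η) (hσd : 0 < σ_d)
    (hθ0 : 0 < θ) (hθ1 : θ ≤ 1) (hp : 0 ≤ p) (hα0 : 0 < α) :
    φ x - φ (x + α • d) >
      η * θ * ᾱ_p * σ_d * (1 - σ) ^ (1 + p) * (ε₁ / (σ * ᾱ_p)) ^ (1 + p) - 4 * ε_f :=
  stmt_6_general n φ f x g d ε_f ε₁ η σ_d p σ ᾱ_p θ α hf harmijo hd1 hlo hgrad hε₁ hσ0 hσ1 hᾱp hα hη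
    hσd hp hα0
end

section
/- In a backtracking Armijo line search accepting α = 1 immediately: if f(x+d) < f(x) + η gᵀd + 2ε_f, |f − φ| ≤ ε_f pointwise, gᵀd ≤ −σ_d‖g‖^{1+p}, and ‖g‖ ≥ (1−σ)‖∇φ(x)‖ with ‖∇φ(x)‖^{1+p} ≥ (ε₁/(σᾱ_p))^{1+p} and σᾱ_p ≤ 1, where η, σ_d > 0, σ ∈ (0,1), ᾱ_p ∈ (0,1], ε₁ ≥ 0, then φ(x) − φ(x+d) > η σ_d (1−σ)^{1+p} (ε₁/(σᾱ_p))^{1+p} − 4ε_f ≥ η σ_d ((1−σ)^{1+p}/σᵖ)·ε₁^{1+p} − 4ε_f. -/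
/-! Up to the noise, the accepted step decreases `f` by at least `η σ_d ‖g‖^(1+p)`; measuring both
`f`-values against `φ` costs `2 ε_f` each. The norm bounds `‖g‖ ≥ (1-σ) ‖∇φ(x)‖ ≥ (1-σ) ε₁/(σ ᾱ_p)`
turn this into the first bound, and `σ ᾱ_p ≤ σ ≤ 1` gives `(σ ᾱ_p)^(1+p) ≤ σ^p`, hence the second. -/

open Real

lemma lt_sub_of_noisy_lt {α : Type*} {f φ : α → ℝ} {x y : α} {ε δ : ℝ}
    (hx : |f x - φ x| ≤ ε) (hy : |f y - φ y| ≤ ε) (h : f y < f x - δ + 2 * ε) :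
    δ - 4 * ε < φ x - φ y := by
  obtain ⟨hx₁, hx₂⟩ := abs_le.mp hx
  obtain ⟨hy₁, hy₂⟩ := abs_le.mp hy
  linarith

lemma mul_rpow_le_rpow_of_mul_le {a b s t q : ℝ} (ha : 0 ≤ a) (ht : 0 ≤ t) (hq : 0 ≤ q)
    (hs : a * t ≤ s) (hb : b ≤ t ^ q) : a ^ q * b ≤ s ^ q :=
  calc a ^ q * b ≤ a ^ q * t ^ q := mul_le_mul_of_nonneg_left hb (rpow_nonneg ha q)
    _ = (a * t) ^ q := (mul_rpow ha ht).symm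
    _ ≤ s ^ q := rpow_le_rpow (mul_nonneg ha ht) hs hq

lemma mul_rpow_one_add_le {σ a p : ℝ} (hσ₀ : 0 < σ) (hσ₁ : σ ≤ 1) (ha₀ : 0 ≤ a) (ha₁ : a ≤ 1)
    (hp : 0 ≤ p) : (σ * a) ^ (1 + p) ≤ σ ^ p :=
  calc (σ * a) ^ (1 + p) ≤ σ ^ (1 + p) :=
        rpow_le_rpow (by positivity) (mul_le_of_le_one_right hσ₀.le ha₁) (by linarith)
    _ = σ * σ ^ p := by rw [rpow_add hσ₀, rpow_one]
    _ ≤ σ ^ p := mul_le_of_le_one_left (rpow_nonneg hσ₀.le p) hσ₁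

lemma rpow_one_add_div_rpow_le {ε σ a p : ℝ} (hε : 0 ≤ ε) (hσ₀ : 0 < σ) (hσ₁ : σ ≤ 1)
    (ha₀ : 0 < a) (ha₁ : a ≤ 1) (hp : 0 ≤ p) :
    ε ^ (1 + p) / σ ^ p ≤ (ε / (σ * a)) ^ (1 + p) := by
  have hσa : 0 < σ * a := mul_pos hσ₀ ha₀
  rw [div_rpow hε hσa.le]
  exact div_le_div_of_nonneg_left (rpow_nonneg hε _) (rpow_pos_of_pos hσa _)
    (mul_rpow_one_add_le hσ₀ hσ₁ ha₀.le ha₁ hp)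

theorem stmt_13_general (n : ℕ) (φ f : EuclideanSpace ℝ (Fin n) → ℝ)
    (x g d : EuclideanSpace ℝ (Fin n)) (ε_f ε₁ η σ_d p σ ᾱ_p : ℝ)
    (hf : ∀ y, |f y - φ y| ≤ ε_f)
    (harmijo : f (x + d) < f x + η * (inner ℝ g d : ℝ) + 2 * ε_f)
    (hd1 : (inner ℝ g d : ℝ) ≤ -σ_d * ‖g‖ ^ (1 + p))
    (hlo : ‖g‖ ≥ (1 - σ) * ‖gradient φ x‖)
    (hgrad : ‖gradient φ x‖ ^ (1 + p) ≥ (ε₁ / (σ * ᾱ_p)) ^ (1 + p))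
    (hη : 0 < η) (hσd : 0 < σ_d)
    (hσ0 : 0 < σ) (hσ1 : σ < 1) (hᾱp0 : 0 < ᾱ_p) (hᾱp1 : ᾱ_p ≤ 1)
    (hε₁ : 0 ≤ ε₁) (hp : 0 ≤ p) :
    φ x - φ (x + d) > η * σ_d * (1 - σ) ^ (1 + p) * (ε₁ / (σ * ᾱ_p)) ^ (1 + p) - 4 * ε_f ∧
      η * σ_d * (1 - σ) ^ (1 + p) * (ε₁ / (σ * ᾱ_p)) ^ (1 + p) - 4 * ε_f ≥
        η * σ_d * ((1 - σ) ^ (1 + p) / σ ^ p) * ε₁ ^ (1 + p) - 4 * ε_f := by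
  have hcoef : 0 ≤ η * σ_d := by positivity
  have hg : (1 - σ) ^ (1 + p) * (ε₁ / (σ * ᾱ_p)) ^ (1 + p) ≤ ‖g‖ ^ (1 + p) :=
    mul_rpow_le_rpow_of_mul_le (by linarith) (norm_nonneg _) (by linarith) hlo hgrad
  have hdescent : η * (inner ℝ g d : ℝ) ≤ -(η * σ_d * ‖g‖ ^ (1 + p)) := by
    have := mul_le_mul_of_nonneg_left hd1 hη.le
    linarith
  constructor
  · refine lt_sub_of_noisy_lt (hf x) (hf (x + d)) ?_
    have := mul_le_mul_of_nonneg_left hg hcoef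
    linarith
  · calc η * σ_d * ((1 - σ) ^ (1 + p) / σ ^ p) * ε₁ ^ (1 + p) - 4 * ε_f
        = η * σ_d * (1 - σ) ^ (1 + p) * (ε₁ ^ (1 + p) / σ ^ p) - 4 * ε_f := by ring
      _ ≤ η * σ_d * (1 - σ) ^ (1 + p) * (ε₁ / (σ * ᾱ_p)) ^ (1 + p) - 4 * ε_f := by
        gcongr
        exact rpow_one_add_div_rpow_le hε₁ hσ0 hσ1.le hᾱp0 hᾱp1 hp

theorem stmt_13 (n : ℕ) (φ f : EuclideanSpace ℝ (Fin n) → ℝ)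
    (x g d : EuclideanSpace ℝ (Fin n)) (ε_f ε₁ η σ_d p σ ᾱ_p : ℝ)
    (hεf : 0 ≤ ε_f) (hf : ∀ y, |f y - φ y| ≤ ε_f)
    (harmijo : f (x + d) < f x + η * (inner ℝ g d : ℝ) + 2 * ε_f)
    (hd1 : (inner ℝ g d : ℝ) ≤ -σ_d * ‖g‖ ^ (1 + p))
    (hlo : ‖g‖ ≥ (1 - σ) * ‖gradient φ x‖)
    (hgrad : ‖gradient φ x‖ ^ (1 + p) ≥ (ε₁ / (σ * ᾱ_p)) ^ (1 + p))
    (hσᾱ : σ * ᾱ_p ≤ 1) (hη : 0 < η) (hσd : 0 < σ_d)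
    (hσ0 : 0 < σ) (hσ1 : σ < 1) (hᾱp0 : 0 < ᾱ_p) (hᾱp1 : ᾱ_p ≤ 1)
    (hε₁ : 0 ≤ ε₁) (hp : 0 ≤ p) :
    φ x - φ (x + d) > η * σ_d * (1 - σ) ^ (1 + p) * (ε₁ / (σ * ᾱ_p)) ^ (1 + p) - 4 * ε_f ∧
      η * σ_d * (1 - σ) ^ (1 + p) * (ε₁ / (σ * ᾱ_p)) ^ (1 + p) - 4 * ε_f ≥
        η * σ_d * ((1 - σ) ^ (1 + p) / σ ^ p) * ε₁ ^ (1 + p) - 4 * ε_f :=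
  stmt_13_general n φ f x g d ε_f ε₁ η σ_d p σ ᾱ_p hf harmijo hd1 hlo hgrad hη hσd hσ0 hσ1 hᾱp0 hᾱp1
    hε₁ hp
end
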